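/- arXiv:math/0403401 — 4 statements merged into one kernel-verified Lean document; each statement's English description precedes it below -/
import Mathlib

section
/- Let P be a finite partially ordered set with |P| = n ≥ 1 and let Z_P be its zeta matrix over ℤ. For 1 ≤ s ≤ n define c_s = Σ 2^{k_σ}, the sum taken over all permutations σ of P such that a is comparable to σ(a) for every a ∈ P and such that k_σ + r_σ = s, where k_σ is the number of fixed points of σ and r_σ is the number of cycles of σ of length greater than 1. Then det(Z_P + Z_Pᵀ) = Σ_{s=1}^{n} (−1)^{n−s} c_s. -/
/-!
Expand the determinant over permutations. The entry of `Z + Zᵀ` at `(σ a, a)` is `2` if `σ`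
fixes `a`, `1` if `a ≠ σ a` are comparable and `0` otherwise, so `σ` contributes
`sign σ * 2 ^ k_σ` exactly when it moves every point to a comparable one. Counting fixed points
as `1`-cycles, `k_σ + r_σ` is the number of parts of the cycle-type partition of `n`, and
`sign σ = (-1) ^ (n - (k_σ + r_σ))`; grouping by `s = k_σ + r_σ ∈ [1, n]` gives the formula.
-/

open Matrix Finset

namespace Nat.Partition

theorem card_parts_le {n : ℕ} (p : n.Partition) : Multiset.card p.parts ≤ n := by
  simpa [p.parts_sum] using Multiset.card_nsmul_le_sum fun i hi => p.parts_pos hi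

theorem card_parts_pos {n : ℕ} (p : n.Partition) (hn : n ≠ 0) : 0 < Multiset.card p.parts := by
  refine Multiset.card_pos.mpr fun h => hn ?_
  rw [← p.parts_sum, h, Multiset.sum_zero]

end Nat.Partition

namespace Equiv.Perm

variable {α : Type*} [Fintype α] [DecidableEq α]

theorem card_filter_apply_eq_self_add_card_support (σ : Perm α) :
    #{a | σ a = a} + #σ.support = Fintype.card α := by
  rw [← card_compl_add_card σ.support]
  congr 2
  ext a
  simp [mem_support]

theorem card_parts_partition (σ : Perm α) :
    Multiset.card σ.partition.parts = #{a | σ a = a} + Multiset.card σ.cycleType := by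
  have := σ.card_filter_apply_eq_self_add_card_support
  rw [parts_partition, Multiset.card_add, Multiset.card_replicate]
  omega

theorem sign_eq_neg_one_pow_sub_card_parts (σ : Perm α) :
    sign σ = (-1 : ℤˣ) ^ (Fintype.card α - Multiset.card σ.partition.parts) := by
  have hparts := σ.card_parts_partition
  have hfix := σ.card_filter_apply_eq_self_add_card_support
  have hsum := σ.sum_cycleType
  have hle := σ.partition.card_parts_le
  have hexp : σ.cycleType.sum + Multiset.card σ.cycleType
      = (Fintype.card α - Multiset.card σ.partition.parts) + 2 * Multiset.card σ.cycleType := by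
    omega
  rw [sign_of_cycleType, hexp, pow_add, pow_mul, neg_one_sq, one_pow, mul_one]

end Equiv.Perm

section ZetaMatrix

variable (R P : Type*) [PartialOrder P] [DecidableRel ((· ≤ ·) : P → P → Prop)]

def zetaMatrix [Zero R] [One R] : Matrix P P R :=
  of fun a b => if a ≤ b then 1 else 0

variable {R P}

theorem zetaMatrix_add_transpose_apply [AddMonoidWithOne R] [DecidableEq P] (a b : P) :
    (zetaMatrix R P + (zetaMatrix R P)ᵀ) a b
      = if a = b then 2 else if a ≤ b ∨ b ≤ a then 1 else 0 := by
  simp only [zetaMatrix, Matrix.add_apply, transpose_apply, of_apply]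
  by_cases hab : a = b
  · simp [hab, one_add_one_eq_two]
  by_cases h : a ≤ b <;> by_cases h' : b ≤ a <;> simp_all [le_antisymm_iff]

theorem prod_zetaMatrix_add_transpose_apply_perm [CommSemiring R] [Fintype P] [DecidableEq P]
    (σ : Equiv.Perm P) :
    ∏ a, (zetaMatrix R P + (zetaMatrix R P)ᵀ) (σ a) a
      = if ∀ a, a ≤ σ a ∨ σ a ≤ a then 2 ^ #{a | σ a = a} else 0 := by
  simp_rw [zetaMatrix_add_transpose_apply, or_comm (a := σ _ ≤ _)]
  split_ifs with hcomp
  · rw [prod_congr rfl fun a _ => if_congr Iff.rfl rfl (if_pos (hcomp a)), prod_ite,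
      prod_const, prod_const_one, mul_one]
  · push Not at hcomp
    obtain ⟨a, ha⟩ := hcomp
    have hmoved : σ a ≠ a := fun h => ha.1 h.symm.le
    exact prod_eq_zero (mem_univ a) (by simp [ha, hmoved])

theorem det_zetaMatrix_add_transpose [CommRing R] [Fintype P] [DecidableEq P] :
    (zetaMatrix R P + (zetaMatrix R P)ᵀ).det
      = ∑ σ : Equiv.Perm P with ∀ a, a ≤ σ a ∨ σ a ≤ a,
          (-1) ^ (Fintype.card P - Multiset.card σ.partition.parts) * 2 ^ #{a | σ a = a} := by
  simp_rw [det_apply, prod_zetaMatrix_add_transpose_apply_perm, smul_ite, smul_zero,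
    sum_ite, sum_const_zero, add_zero, Equiv.Perm.sign_eq_neg_one_pow_sub_card_parts,
    Units.smul_def, zsmul_eq_mul]
  push_cast
  rfl

end ZetaMatrix

/-- For a finite poset `P` with `|P| = n ≥ 1` and zeta matrix `Z_P` over `ℤ`,
`det (Z_P + Z_Pᵀ) = ∑_{s=1}^n (-1)^{n-s} c_s`, where
`c_s = ∑ 2^{k_σ}` over permutations `σ` of `P` with `a` comparable to `σ a` for all `a`
and `k_σ + r_σ = s` (`k_σ` = number of fixed points, `r_σ` = number of nontrivial cycles). -/
theorem det_zeta_add_transpose_eq_alternating_sum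
    (P : Type*) [Fintype P] [PartialOrder P] [DecidableEq P]
    [DecidableRel ((· ≤ ·) : P → P → Prop)]
    (hn : 1 ≤ Fintype.card P)
    (Z : Matrix P P ℤ)
    (hZ : Z = Matrix.of fun a b : P => if a ≤ b then (1 : ℤ) else 0) :
    (Z + Zᵀ).det
      = ∑ s ∈ Finset.Icc 1 (Fintype.card P),
          (-1 : ℤ) ^ (Fintype.card P - s) *
            ∑ σ ∈ Finset.univ.filter
                (fun σ : Equiv.Perm P =>
                  (∀ a : P, a ≤ σ a ∨ σ a ≤ a) ∧
                  (Finset.univ.filter fun a : P => σ a = a).card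
                      + Multiset.card σ.cycleType = s),
              (2 : ℤ) ^ (Finset.univ.filter fun a : P => σ a = a).card := by
  have hparts : ∀ σ : Equiv.Perm P,
      Multiset.card σ.partition.parts ∈ Icc 1 (Fintype.card P) := fun σ =>
    mem_Icc.mpr ⟨σ.partition.card_parts_pos (by omega), σ.partition.card_parts_le⟩
  rw [hZ, ← zetaMatrix, det_zetaMatrix_add_transpose,
    ← sum_fiberwise_of_maps_to (g := fun σ => Multiset.card σ.partition.parts)
      fun σ _ => hparts σ]
  refine sum_congr rfl fun s _ => ?_
  rw [mul_sum, filter_filter]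
  refine sum_congr (by simp_rw [Equiv.Perm.card_parts_partition]) fun σ hσ => ?_
  rw [Equiv.Perm.card_parts_partition, (mem_filter.mp hσ).2.2]
end

section
/- Let n be a positive integer. Then Σ_{σ ∈ S_n} sign(σ)·2^{k_σ} = n + 1, where the sum is over all permutations σ of an n-element set, sign(σ) is the sign of σ, and k_σ is the number of fixed points of σ. -/
/-- For `n ≥ 1`, `∑_{σ ∈ S_n} sign σ · 2^{k_σ} = n + 1`, where `k_σ` is the number of
fixed points of `σ`. -/
theorem sum_sign_two_pow_fixedPoints (n : ℕ) (hn : 0 < n) :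
    ∑ σ : Equiv.Perm (Fin n),
        (Equiv.Perm.sign σ : ℤ) * 2 ^ (Finset.univ.filter fun a : Fin n => σ a = a).card
      = n + 1 := by
  set M : Matrix (Fin n) (Fin n) ℤ :=
    1 + Matrix.replicateCol Unit (fun _ : Fin n => (1:ℤ)) * Matrix.replicateRow Unit (fun _ : Fin n => (1:ℤ))
    with hM
  have key : ∑ σ : Equiv.Perm (Fin n),
      (Equiv.Perm.sign σ : ℤ) * 2 ^ (Finset.univ.filter fun a : Fin n => σ a = a).card
      = M.det := by
    rw [Matrix.det_apply]
    refine Finset.sum_congr rfl fun σ _ => ?_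
    have h : ∀ i : Fin n, M (σ i) i = if σ i = i then 2 else 1 := by
      intro i
      simp only [hM, Matrix.add_apply, Matrix.mul_apply, Matrix.one_apply, Matrix.replicateCol_apply,
        Matrix.replicateRow_apply, Finset.sum_const, Finset.card_univ, Fintype.card_unit, one_smul,
        one_mul]
      split <;> norm_num
    have hp : ∏ i : Fin n, M (σ i) i
        = 2 ^ (Finset.univ.filter fun a : Fin n => σ a = a).card := by
      simp_rw [h]
      rw [Finset.prod_ite, Finset.prod_const, Finset.prod_const, one_pow, mul_one]
    rw [hp, Units.smul_def, zsmul_eq_mul]; norm_num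
  rw [key, hM, Matrix.det_one_add_replicateCol_mul_replicateRow]
  simp [dotProduct, add_comm]
end

section
/- Let Z_n denote the zeta matrix over a commutative ring R of the boolean algebra of subsets of {0,…,n−1} ordered by inclusion. For x, y ∈ R and every natural number n, det(x·Z_{n+2} + y·Z_{n+2}ᵀ) = (det(x·Z_n + y·Z_nᵀ))² · det(x·Z_{n+1} − y·Z_{n+1}ᵀ). -/
/-!
Splitting off the last coordinates gives `Z_{n+m} ≅ Z_n ⊗ Z_m`, so every determinant in the
recurrence is that of a Kronecker pencil `x (Z_n ⊗ P) + y (Z_nᵀ ⊗ Q)`. Such a determinant only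
changes by `det U * det V` when `(P, Q)` is replaced by `(U P V, U Q V)`, and it factors along a
block-triangular decomposition of `(P, Q)`. For `m = 2`, unimodular `U`, `V` bring `(Z₂, Z₂ᵀ)` to
block-triangular form with diagonal blocks `(1, 1)` and `(Z₁, -Z₁ᵀ)`, which yields the factors
`det (x Z_n + y Z_nᵀ)²` and `det (x Z_{n+1} - y Z_{n+1}ᵀ)`.
-/

open Matrix

/-- The zeta matrix over a commutative ring `R` of the boolean algebra of subsets of
`{0, …, n-1}`. -/
def boolZeta (R : Type*) [CommRing R] (n : ℕ) :
    Matrix (Finset (Fin n)) (Finset (Fin n)) R :=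
  Matrix.of fun A B => if A ⊆ B then 1 else 0

open scoped Kronecker

namespace Matrix

variable {R ι κ κ₁ κ₂ : Type*} [CommRing R]

def kroneckerPencil (x y : R) (A B : Matrix ι ι R) (P Q : Matrix κ κ R) :
    Matrix (ι × κ) (ι × κ) R :=
  x • (A ⊗ₖ P) + y • (B ⊗ₖ Q)

variable (x y : R) (A B : Matrix ι ι R)

theorem kroneckerPencil_neg_right (P Q : Matrix κ κ R) :
    kroneckerPencil x y A B P (-Q) = kroneckerPencil x (-y) A B P Q := by
  ext; simp [kroneckerPencil]

variable [Fintype ι] [DecidableEq ι] [Fintype κ] [DecidableEq κ] [Fintype κ₁] [DecidableEq κ₁]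
  [Fintype κ₂] [DecidableEq κ₂]

theorem det_kroneckerPencil_mul_mul (P Q U V : Matrix κ κ R) (hUV : U.det * V.det = 1) :
    (kroneckerPencil x y A B (U * P * V) (U * Q * V)).det
      = (kroneckerPencil x y A B P Q).det := by
  have hconj : kroneckerPencil x y A B (U * P * V) (U * Q * V)
      = (1 ⊗ₖ U) * kroneckerPencil x y A B P Q * (1 ⊗ₖ V) := by
    simp only [kroneckerPencil, Matrix.mul_add, Matrix.add_mul, Matrix.mul_smul, Matrix.smul_mul,
      ← mul_kronecker_mul, Matrix.one_mul, Matrix.mul_one]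
  rw [hconj, det_mul, det_mul, det_kronecker, det_kronecker, det_one, one_pow, one_mul, one_mul,
    mul_right_comm, ← mul_pow, hUV, one_pow, one_mul]

theorem det_kroneckerPencil_submatrix (P Q : Matrix κ κ R) (e : κ₁ ≃ κ) :
    (kroneckerPencil x y A B (P.submatrix e e) (Q.submatrix e e)).det
      = (kroneckerPencil x y A B P Q).det := by
  rw [← det_submatrix_equiv_self ((Equiv.refl ι).prodCongr e)]
  rfl

theorem det_kroneckerPencil_one :
    (kroneckerPencil x y A B (1 : Matrix κ κ R) 1).det = (x • A + y • B).det ^ Fintype.card κ := by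
  rw [kroneckerPencil, ← smul_kronecker, ← smul_kronecker, ← add_kronecker, det_kronecker, det_one,
    one_pow, mul_one]

theorem det_kroneckerPencil_fromBlocks_zero₂₁ (P₁ Q₁ : Matrix κ₁ κ₁ R) (P₂ Q₂ : Matrix κ₁ κ₂ R)
    (P₃ Q₃ : Matrix κ₂ κ₂ R) :
    (kroneckerPencil x y A B (fromBlocks P₁ P₂ 0 P₃) (fromBlocks Q₁ Q₂ 0 Q₃)).det
      = (kroneckerPencil x y A B P₁ Q₁).det * (kroneckerPencil x y A B P₃ Q₃).det := by
  have hblocks : (kroneckerPencil x y A B (fromBlocks P₁ P₂ 0 P₃) (fromBlocks Q₁ Q₂ 0 Q₃)).submatrix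
        (Equiv.prodSumDistrib ι κ₁ κ₂).symm (Equiv.prodSumDistrib ι κ₁ κ₂).symm
      = fromBlocks (kroneckerPencil x y A B P₁ Q₁) (x • (A ⊗ₖ P₂) + y • (B ⊗ₖ Q₂)) 0
          (kroneckerPencil x y A B P₃ Q₃) := by
    ext (⟨i, k⟩ | ⟨i, k⟩) (⟨j, l⟩ | ⟨j, l⟩) <;> simp [kroneckerPencil]
  rw [← det_submatrix_equiv_self (Equiv.prodSumDistrib ι κ₁ κ₂).symm, hblocks,
    det_fromBlocks_zero₂₁]

end Matrix

section BoolZeta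

variable (R : Type*) [CommRing R]

def finsetFinAddEquiv (n m : ℕ) : Finset (Fin (n + m)) ≃ Finset (Fin n) × Finset (Fin m) :=
  (Equiv.finsetCongr finSumFinEquiv.symm).trans Finset.sumEquiv.toEquiv

theorem boolZeta_submatrix_finsetFinAddEquiv (n m : ℕ) :
    (boolZeta R (n + m)).submatrix (finsetFinAddEquiv n m).symm (finsetFinAddEquiv n m).symm
      = boolZeta R n ⊗ₖ boolZeta R m := by
  ext ⟨a, b⟩ ⟨c, d⟩
  have hsub : (finsetFinAddEquiv n m).symm (a, b) ⊆ (finsetFinAddEquiv n m).symm (c, d)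
      ↔ a ⊆ c ∧ b ⊆ d := by
    simp only [finsetFinAddEquiv, Equiv.symm_trans_apply, Equiv.finsetCongr_symm,
      Equiv.finsetCongr_apply, Finset.map_subset_map]
    exact Finset.sumEquiv.symm.le_iff_le
  simp only [submatrix_apply, boolZeta, of_apply, hsub, kroneckerMap_apply, ite_zero_mul_ite_zero,
    mul_one]

theorem det_boolZeta_pencil_add (x y : R) (n m : ℕ) :
    (x • boolZeta R (n + m) + y • (boolZeta R (n + m))ᵀ).det
      = (kroneckerPencil x y (boolZeta R n) (boolZeta R n)ᵀ (boolZeta R m) (boolZeta R m)ᵀ).det := by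
  rw [← det_submatrix_equiv_self (finsetFinAddEquiv n m).symm, kroneckerPencil,
    kroneckerMap_transpose, ← boolZeta_submatrix_finsetFinAddEquiv, transpose_submatrix]
  rfl

def zetaFinTwo : Matrix (Fin 2) (Fin 2) R :=
  !![1, 1; 0, 1]

def finsetFinOneEquiv : Finset (Fin 1) ≃ Fin 2 where
  toFun S := if 0 ∈ S then 1 else 0
  invFun := ![∅, {0}]
  left_inv := by decide
  right_inv := by decide

def finsetFinTwoEquiv : Finset (Fin 2) ≃ Fin 2 ⊕ Fin 2 where
  toFun S := if 1 ∈ S then .inr (if 0 ∈ S then 1 else 0) else .inl (if 0 ∈ S then 1 else 0)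
  invFun := Sum.elim ![∅, {0}] ![{1}, {0, 1}]
  left_inv := by decide
  right_inv := by decide

theorem boolZeta_one_submatrix :
    (boolZeta R 1).submatrix finsetFinOneEquiv.symm finsetFinOneEquiv.symm = zetaFinTwo R := by
  ext i j
  fin_cases i <;> fin_cases j <;> simp +decide [boolZeta, finsetFinOneEquiv, zetaFinTwo]

theorem boolZeta_two_submatrix :
    (boolZeta R 2).submatrix finsetFinTwoEquiv.symm finsetFinTwoEquiv.symm
      = fromBlocks (zetaFinTwo R) (zetaFinTwo R) 0 (zetaFinTwo R) := by
  ext (i | i) (j | j) <;> fin_cases i <;> fin_cases j <;>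
    simp +decide [boolZeta, finsetFinTwoEquiv, zetaFinTwo]

/- A block-diagonal reduction would force `3 ∣ det U` over `ℤ`; the block-triangular one is
unimodular. -/
theorem exists_zetaFinTwo_pencil_reduction :
    ∃ U V : Matrix (Fin 2 ⊕ Fin 2) (Fin 2 ⊕ Fin 2) R, U.det * V.det = 1 ∧
      U * fromBlocks (zetaFinTwo R) (zetaFinTwo R) 0 (zetaFinTwo R) * V
        = fromBlocks 1 !![0, -1; 1, 0] 0 (zetaFinTwo R) ∧
      U * (fromBlocks (zetaFinTwo R) (zetaFinTwo R) 0 (zetaFinTwo R))ᵀ * V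
        = fromBlocks 1 0 0 (-(zetaFinTwo R)ᵀ) := by
  refine ⟨fromBlocks !![-1, 0; -1, 1] 0 !![-1, 1; 0, 1] !![1, 0; 1, -1],
    fromBlocks !![-1, 0; 0, 1] 0 !![1, -1; -1, 0] !![-1, 0; 1, 1], ?_, ?_, ?_⟩
  · simp [det_fromBlocks_zero₁₂, det_fin_two_of]
  all_goals
    ext (i | i) (j | j) <;> fin_cases i <;> fin_cases j <;>
      simp [zetaFinTwo, mul_apply, Fintype.sum_sum_type, Fin.sum_univ_two]

end BoolZeta

/-- The recurrence
`det (x Z_{n+2} + y Z_{n+2}ᵀ) = det (x Z_n + y Z_nᵀ)² · det (x Z_{n+1} - y Z_{n+1}ᵀ)`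
for the zeta matrices of the boolean algebras. -/
theorem det_boolZeta_recurrence (R : Type*) [CommRing R] (x y : R) (n : ℕ) :
    (x • boolZeta R (n + 2) + y • (boolZeta R (n + 2))ᵀ).det
      = (x • boolZeta R n + y • (boolZeta R n)ᵀ).det ^ 2
          * (x • boolZeta R (n + 1) - y • (boolZeta R (n + 1))ᵀ).det := by
  set Z := boolZeta R n
  set C := zetaFinTwo R
  obtain ⟨U, V, hUV, hZ₂, hZ₂T⟩ := exists_zetaFinTwo_pencil_reduction R
  calc (x • boolZeta R (n + 2) + y • (boolZeta R (n + 2))ᵀ).det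
      = (kroneckerPencil x y Z Zᵀ (fromBlocks C C 0 C) (fromBlocks C C 0 C)ᵀ).det := by
        rw [det_boolZeta_pencil_add, ← det_kroneckerPencil_submatrix (e := finsetFinTwoEquiv.symm),
          ← transpose_submatrix, boolZeta_two_submatrix]
    _ = (kroneckerPencil x y Z Zᵀ (fromBlocks 1 !![0, -1; 1, 0] 0 C)
          (fromBlocks 1 0 0 (-Cᵀ))).det := by
        rw [← hZ₂, ← hZ₂T, det_kroneckerPencil_mul_mul (hUV := hUV)]
    _ = (x • Z + y • Zᵀ).det ^ 2 * (kroneckerPencil x (-y) Z Zᵀ C Cᵀ).det := by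
        rw [det_kroneckerPencil_fromBlocks_zero₂₁, det_kroneckerPencil_one, Fintype.card_fin,
          kroneckerPencil_neg_right]
    _ = _ := by
        rw [sub_eq_add_neg, ← neg_smul, det_boolZeta_pencil_add,
          ← det_kroneckerPencil_submatrix (e := finsetFinOneEquiv.symm), ← transpose_submatrix,
          boolZeta_one_submatrix]
end

section
/- Let Z_n denote the zeta matrix over a commutative ring R of the boolean algebra of subsets of {0,…,n−1} ordered by inclusion. For every n ≥ 1 and all x, y ∈ R, det(x·Z_n + y·Z_nᵀ) = (x + (−1)ⁿ y)^{α_n} · (x² − (−1)ⁿ xy + y²)^{β_n}, where α_n = (2ⁿ + 2·(−1)ⁿ)/3 and β_n = (2ⁿ − (−1)ⁿ)/3 (both natural numbers). -/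
open Matrix

lemma castSuccEmb_apply {n : ℕ} (i : Fin n) : Fin.castSuccEmb i = i.castSucc := rfl

lemma castLE_eq_castSucc {n : ℕ} (h : n ≤ n + 1) (a : Fin n) :
    Fin.castLE h a = a.castSucc := rfl

/-- Split subsets of `Fin (n+1)` by whether they contain `Fin.last n`. -/
noncomputable def boolSplit (n : ℕ) : Finset (Fin (n + 1)) ≃ Finset (Fin n) ⊕ Finset (Fin n) where
  toFun B := if Fin.last n ∈ B then
      Sum.inr (B.preimage Fin.castSucc (Fin.castSucc_injective n).injOn)
    else Sum.inl (B.preimage Fin.castSucc (Fin.castSucc_injective n).injOn)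
  invFun := Sum.elim (fun A => A.map Fin.castSuccEmb)
    (fun A => insert (Fin.last n) (A.map Fin.castSuccEmb))
  left_inv B := by
    by_cases h : Fin.last n ∈ B <;> simp only [h, if_true, if_false] <;>
    · ext x
      induction x using Fin.lastCases with
      | last => simp [h, castSuccEmb_apply, castLE_eq_castSucc,
          fun i : Fin n => (Fin.castSucc_lt_last i).ne]
      | cast i => simp [castSuccEmb_apply, castLE_eq_castSucc, (Fin.castSucc_lt_last i).ne,
          (Fin.castSucc_injective n).eq_iff]
  right_inv A := by
    rcases A with A | A
    · have h : Fin.last n ∉ A.map Fin.castSuccEmb := by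
        simp [castSuccEmb_apply, castLE_eq_castSucc,
          fun i : Fin n => (Fin.castSucc_lt_last i).ne]
      rw [Sum.elim_inl]
      beta_reduce
      rw [if_neg h]
      refine congrArg Sum.inl ?_
      ext i
      simp [Finset.mem_preimage, castSuccEmb_apply, castLE_eq_castSucc,
        (Fin.castSucc_injective n).eq_iff]
    · rw [Sum.elim_inr]
      beta_reduce
      rw [if_pos (Finset.mem_insert_self _ _)]
      refine congrArg Sum.inr ?_
      ext i
      simp [Finset.mem_preimage, castSuccEmb_apply, castLE_eq_castSucc,
        (Fin.castSucc_lt_last i).ne, (Fin.castSucc_injective n).eq_iff]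

lemma subset_iff_preimage {n : ℕ} {A B : Finset (Fin (n + 1))}
    (h : Fin.last n ∈ A → Fin.last n ∈ B) :
    A ⊆ B ↔ A.preimage Fin.castSucc (Fin.castSucc_injective n).injOn ⊆
      B.preimage Fin.castSucc (Fin.castSucc_injective n).injOn := by
  constructor
  · intro hAB i hi
    rw [Finset.mem_preimage] at hi ⊢
    exact hAB hi
  · intro hp x hx
    induction x using Fin.lastCases with
    | last => exact h hx
    | cast i =>
      have : i ∈ A.preimage Fin.castSucc (Fin.castSucc_injective n).injOn :=
        Finset.mem_preimage.2 hx
      exact Finset.mem_preimage.1 (hp this)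

lemma boolZeta_succ (R : Type*) [CommRing R] (n : ℕ) :
    boolZeta R (n + 1) =
      (fromBlocks (boolZeta R n) (boolZeta R n) 0 (boolZeta R n)).submatrix
        (boolSplit n) (boolSplit n) := by
  ext A B
  by_cases hA : Fin.last n ∈ A <;> by_cases hB : Fin.last n ∈ B <;>
    simp only [submatrix_apply, boolSplit, Equiv.coe_fn_mk, hA, hB, if_true, if_false,
      fromBlocks_apply₁₁, fromBlocks_apply₁₂, fromBlocks_apply₂₁, fromBlocks_apply₂₂,
      boolZeta, Matrix.of_apply]
  · exact if_congr (subset_iff_preimage (fun _ => hB)) rfl rfl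
  · rw [if_neg (fun hs => hB (hs hA))]
    simp
  · exact if_congr (subset_iff_preimage (fun h => absurd h hA)) rfl rfl
  · exact if_congr (subset_iff_preimage (fun h => absurd h hA)) rfl rfl

/-- The Coxeter-type matrix `Z⁻¹ Zᵀ`, defined recursively. -/
noncomputable def Cmat (R : Type*) [CommRing R] : (n : ℕ) →
    Matrix (Finset (Fin n)) (Finset (Fin n)) R
  | 0 => 1
  | n + 1 => (fromBlocks 0 (-(Cmat R n)) (Cmat R n) (Cmat R n)).submatrix
      (boolSplit n) (boolSplit n)

lemma boolZeta_zero (R : Type*) [CommRing R] : boolZeta R 0 = 1 := by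
  ext A B
  have h : A = B := Subsingleton.elim A B
  subst h
  simp [boolZeta, Matrix.one_apply_eq]

lemma boolZeta_mul_Cmat (R : Type*) [CommRing R] (n : ℕ) :
    boolZeta R n * Cmat R n = (boolZeta R n)ᵀ := by
  induction n with
  | zero => rw [Cmat, mul_one, boolZeta_zero, transpose_one]
  | succ n ih =>
    rw [boolZeta_succ, Cmat, submatrix_mul_equiv, fromBlocks_multiply, transpose_submatrix,
      fromBlocks_transpose]
    congr 1 <;> simp [ih]

lemma Cmat_cube (R : Type*) [CommRing R] (n : ℕ) :
    Cmat R n * (Cmat R n * Cmat R n) = ((-1 : R) ^ n) • 1 := by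
  induction n with
  | zero => simp [Cmat]
  | succ n ih =>
    rw [Cmat, submatrix_mul_equiv, submatrix_mul_equiv, fromBlocks_multiply, fromBlocks_multiply]
    have key : ∀ M : Matrix (Finset (Fin n) ⊕ Finset (Fin n))
        (Finset (Fin n) ⊕ Finset (Fin n)) R,
        M = ((-1 : R) ^ (n+1)) • 1 →
        M.submatrix (boolSplit n) (boolSplit n) = ((-1 : R) ^ (n+1)) • 1 := by
      intro M hM
      subst hM
      ext i j
      simp [Matrix.one_apply, Equiv.apply_eq_iff_eq]
    apply key
    rw [← fromBlocks_one, fromBlocks_smul]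
    congr 1 <;>
      simp [mul_add, neg_mul, mul_neg, ← mul_assoc, pow_succ, ih, smul_smul, mul_comm] <;>
      rw [show Cmat R n * Cmat R n * Cmat R n = Cmat R n * (Cmat R n * Cmat R n) from
        (mul_assoc _ _ _), ih] <;> simp [pow_succ, smul_smul, mul_comm]

lemma det_boolZeta (R : Type*) [CommRing R] (n : ℕ) : (boolZeta R n).det = 1 := by
  induction n with
  | zero => rw [boolZeta_zero, det_one]
  | succ n ih =>
    rw [boolZeta_succ, det_submatrix_equiv_self, det_fromBlocks_zero₂₁, ih, mul_one]

/-- Determinant of a 2×2 block matrix with commuting lower-left/lower-right blocks. -/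
lemma det_fromBlocks_of_comm {m : Type*} [DecidableEq m] [Fintype m]
    {R : Type*} [CommRing R] (A B C D : Matrix m m R) (h : C * D = D * C) :
    (fromBlocks A B C D).det = (A * D - B * C).det := by
  have gen : ∀ (A B C D : Matrix m m (Polynomial R)), C * D = D * C →
      (fromBlocks A B C D).det * D.det = (A * D - B * C).det * D.det := by
    intro A B C D h
    have key : fromBlocks A B C D * fromBlocks D 0 (-C) 1 = fromBlocks (A * D - B * C) B 0 D := by
      rw [fromBlocks_multiply]
      congr 1 <;> simp [h, mul_neg, sub_eq_add_neg]
    calc (fromBlocks A B C D).det * D.det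
        = (fromBlocks A B C D).det * (fromBlocks D 0 (-C) (1 : Matrix m m (Polynomial R))).det := by
          rw [det_fromBlocks_zero₁₂, det_one, mul_one]
      _ = (fromBlocks (A * D - B * C) B 0 D).det := by rw [← det_mul, key]
      _ = (A * D - B * C).det * D.det := det_fromBlocks_zero₂₁ _ _ _
  -- lift over polynomials to make `D` "invertible"
  let f : R →+* Polynomial R := Polynomial.C
  let A' := A.map f
  let B' := B.map f
  let C' := C.map f
  let D' := Matrix.scalar m Polynomial.X + D.map f
  have hcomm : C' * D' = D' * C' := by
    simp only [D', mul_add, add_mul, C', A', B', ← Matrix.map_mul, h]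
    rw [Matrix.scalar_commute]
    intro r
    exact Polynomial.X_mul
  have hD'det : D'.det = (-D).charpoly := by
    rw [Matrix.charpoly, Matrix.charmatrix]
    congr 1
    ext i j
    simp [D', f, sub_eq_add_neg, Matrix.one_apply, Matrix.diagonal, Matrix.of_apply,
      mul_comm]
  have hreg : IsRegular D'.det := by
    rw [hD'det]
    exact (Matrix.charpoly_monic _).isRegular
  have main : (fromBlocks A' B' C' D').det = (A' * D' - B' * C').det := by
    apply hreg.right
    show (fromBlocks A' B' C' D').det * D'.det = (A' * D' - B' * C').det * D'.det
    exact gen A' B' C' D' hcomm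
  -- evaluate at `X = 0`
  have := congrArg (Polynomial.evalRingHom (0 : R)) main
  rw [RingHom.map_det, RingHom.map_det] at this
  simp only [RingHom.mapMatrix_apply] at this
  have hmap : ∀ M : Matrix m m R, (M.map f).map (Polynomial.evalRingHom (0 : R)) = M := by
    intro M
    ext i j
    simp [f]
  have hD'0 : D'.map (Polynomial.evalRingHom (0 : R)) = D := by
    ext i j
    simp [D', f, Matrix.one_apply, Matrix.scalar, Matrix.diagonal, Matrix.of_apply,
      apply_ite (Polynomial.eval (0 : R))]
  rw [Matrix.fromBlocks_map, hmap, hmap, hmap, hD'0] at this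
  rw [← RingHom.mapMatrix_apply] at this
  rw [map_sub, _root_.map_mul, _root_.map_mul] at this
  simp only [RingHom.mapMatrix_apply] at this
  rw [hmap, hmap, hmap, hD'0] at this
  exact this

lemma exists_ab (n : ℕ) : ∃ a b : ℕ,
    (3 * a : ℤ) = 2 ^ n + 2 * (-1) ^ n ∧ (3 * b : ℤ) = 2 ^ n - (-1) ^ n := by
  induction n with
  | zero => exact ⟨1, 0, by norm_num, by norm_num⟩
  | succ n ih =>
    obtain ⟨a, b, ha, hb⟩ := ih
    refine ⟨2 * b, a + b, ?_, ?_⟩ <;>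
    · push_cast
      rw [pow_succ, pow_succ]
      linarith

lemma det_aux (R : Type*) [CommRing R] (n : ℕ) : ∀ (a b c : R) (α β : ℕ),
    (3 * α : ℤ) = 2 ^ n + 2 * (-1) ^ n → (3 * β : ℤ) = 2 ^ n - (-1) ^ n →
    (a • 1 + b • Cmat R n + c • (Cmat R n * Cmat R n)).det
      = (a + (-1 : R) ^ n * b + c) ^ α *
        (a ^ 2 + b ^ 2 + c ^ 2 - (-1 : R) ^ n * (a * b) - (-1 : R) ^ n * (b * c) - a * c) ^ β := by
  induction n with
  | zero =>
    intro a b c α β hα hβ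
    norm_num at hα hβ
    have hα1 : α = 1 := by omega
    have hβ0 : β = 0 := by omega
    subst hα1 hβ0
    rw [show Cmat R 0 = (1 : Matrix (Finset (Fin 0)) (Finset (Fin 0)) R) from rfl, mul_one]
    have : a • (1 : Matrix (Finset (Fin 0)) (Finset (Fin 0)) R) + b • 1 + c • 1
        = (a + b + c) • 1 := by
      rw [add_smul, add_smul]
    rw [this, Matrix.det_unique]
    simp [Matrix.one_apply_eq]
  | succ n ih =>
    intro a b c α β hα hβ
    obtain ⟨α', β', hα', hβ'⟩ := exists_ab n
    have hab : α = 2 * β' := by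
      have : (α : ℤ) = 2 * β' := by
        rw [pow_succ, pow_succ] at hα
        linarith
      exact_mod_cast this
    have hbb : β = α' + β' := by
      have : (β : ℤ) = α' + β' := by
        rw [pow_succ, pow_succ] at hβ
        linarith
      exact_mod_cast this
    set C := Cmat R n with hC
    set ε := ((-1 : R) ^ n) with hε
    have hcube : C * (C * C) = ε • 1 := Cmat_cube R n
    have hεpm : ε = 1 ∨ ε = -1 := by
      rcases Nat.even_or_odd n with h | h
      · left; rw [hε, h.neg_one_pow]
      · right; rw [hε, h.neg_one_pow]
    have hCs : Cmat R (n + 1)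
        = (fromBlocks 0 (-C) C C).submatrix (boolSplit n) (boolSplit n) := by
      rw [hC]
      conv_lhs => rw [Cmat]
    set N : Matrix (Finset (Fin n) ⊕ Finset (Fin n)) (Finset (Fin n) ⊕ Finset (Fin n)) R :=
      fromBlocks 0 (-C) C C with hN
    have step1 : a • 1 + b • Cmat R (n+1) + c • (Cmat R (n+1) * Cmat R (n+1))
        = (a • 1 + b • N + c • (N * N)).submatrix (boolSplit n) (boolSplit n) := by
      rw [hCs, submatrix_mul_equiv]
      ext i j
      simp [Matrix.one_apply, Equiv.apply_eq_iff_eq]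
    rw [step1, det_submatrix_equiv_self]
    have hblocks : a • (1 : Matrix (Finset (Fin n) ⊕ Finset (Fin n)) _ R) + b • N + c • (N * N)
        = fromBlocks (a • 1 - c • (C * C)) (-(b • C) - c • (C * C))
            (b • C + c • (C * C)) (a • 1 + b • C) := by
      have hNN : N * N = fromBlocks (-(C * C)) (-(C * C)) (C * C) 0 := by
        rw [hN, fromBlocks_multiply, fromBlocks_inj]
        refine ⟨?_, ?_, ?_, ?_⟩ <;> simp [neg_mul, mul_neg]
      rw [hNN, hN, ← fromBlocks_one, fromBlocks_smul, fromBlocks_smul, fromBlocks_smul,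
        fromBlocks_add, fromBlocks_add, fromBlocks_inj]
      refine ⟨?_, ?_, ?_, ?_⟩ <;> module
    rw [hblocks, det_fromBlocks_of_comm]
    · have hprod : (a • 1 - c • (C * C)) * (a • 1 + b • C)
          - (-(b • C) - c • (C * C)) * (b • C + c • (C * C))
          = (a * a + ε * (b * c)) • 1 + (a * b + ε * (c * c)) • C
            + (b * b - a * c) • (C * C) := by
        simp only [sub_mul, mul_sub, add_mul, mul_add, neg_mul, smul_mul_assoc,
          mul_smul_comm, smul_smul, mul_one, one_mul, mul_assoc, hcube]
        module
      rw [hprod, ih _ _ _ α' β' hα' hβ']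
      have hpow : ((-1 : R) ^ (n + 1)) = -ε := by rw [pow_succ, hε]; ring
      rw [hpow, hab, hbb]
      have e1 : a * a + ε * (b * c) + ε * (a * b + ε * (c * c)) + (b * b - a * c)
          = a ^ 2 + b ^ 2 + c ^ 2 - -ε * (a * b) - -ε * (b * c) - a * c := by
        rcases hεpm with h | h <;> rw [h] <;> ring
      have e2 : (a * a + ε * (b * c)) ^ 2 + (a * b + ε * (c * c)) ^ 2 + (b * b - a * c) ^ 2
          - ε * ((a * a + ε * (b * c)) * (a * b + ε * (c * c)))
          - ε * ((a * b + ε * (c * c)) * (b * b - a * c))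
          - (a * a + ε * (b * c)) * (b * b - a * c)
          = (a + -ε * b + c) ^ 2 *
            (a ^ 2 + b ^ 2 + c ^ 2 - -ε * (a * b) - -ε * (b * c) - a * c) := by
        rcases hεpm with h | h <;> rw [h] <;> ring
      rw [e1, e2, mul_pow, pow_add, ← pow_mul]
      ring
    · -- commutation of the lower blocks
      simp only [add_mul, mul_add, smul_mul_assoc, mul_smul_comm, smul_smul,
        mul_one, one_mul, mul_assoc]
      module

/-- For `n ≥ 1`, `det (x Z_n + y Z_nᵀ) = (x + (-1)ⁿ y)^{α_n} (x² - (-1)ⁿ xy + y²)^{β_n}`,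
where `α_n = (2ⁿ + 2·(-1)ⁿ)/3` and `β_n = (2ⁿ - (-1)ⁿ)/3` are natural numbers. -/
theorem det_boolZeta_smul_add_transpose (R : Type*) [CommRing R]
    (n : ℕ) (hn : 1 ≤ n) (x y : R) (α β : ℕ)
    (hα : (3 * α : ℤ) = 2 ^ n + 2 * (-1) ^ n)
    (hβ : (3 * β : ℤ) = 2 ^ n - (-1) ^ n) :
    (x • boolZeta R n + y • (boolZeta R n)ᵀ).det
      = (x + (-1) ^ n * y) ^ α * (x ^ 2 - (-1) ^ n * (x * y) + y ^ 2) ^ β := by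
  have hZC : (boolZeta R n)ᵀ = boolZeta R n * Cmat R n := (boolZeta_mul_Cmat R n).symm
  rw [hZC]
  have hfactor : x • boolZeta R n + y • (boolZeta R n * Cmat R n)
      = boolZeta R n * (x • 1 + y • Cmat R n + (0 : R) • (Cmat R n * Cmat R n)) := by
    rw [zero_smul, add_zero, mul_add, mul_smul_comm, mul_one, mul_smul_comm]
  rw [hfactor, det_mul, det_boolZeta, one_mul, det_aux R n x y 0 α β hα hβ]
  ring
end
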